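/- arXiv:1510.02051 — 6 statements merged into one kernel-verified Lean document; each statement's English description precedes it below -/
import Mathlib

section
/- If (x,y) lies in the interior of the medial triangle of T (i.e., v/2 - (v/u)x < y < v/2 and 0 < x < u/2), then setting w = (2uy + 2vx - uv)/(2vx) and t = (2uy + 2vx - uv)/(2uy), we have 0 < w < 1, 0 < t < 1, and x = (1/2)·tu/(w+(1-w)t), y = (1/2)·wv/(w+(1-w)t). -/
/-!
With `N = 2uy + 2vx - uv`, the hypothesis `v/2 - (v/u)x < y` says `N > 0`, and `w = N/(2vx)`,
`t = N/(2uy)` lie below `1` exactly because `y < v/2` and `x < u/2`. The common denominator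
collapses to `w + (1 - w)t = N/(4xy)`, after which both coordinate identities are field arithmetic.
-/

lemma pos_of_sub_div_mul_lt {u v x y : ℝ} (hu : 0 < u) (hv : 0 < v)
    (h1 : v / 2 - v / u * x < y) (h4 : x < u / 2) : 0 < y := by
  have hvx : v / u * x < v / 2 := by
    calc v / u * x < v / u * (u / 2) := mul_lt_mul_of_pos_left h4 (div_pos hv hu)
      _ = v / 2 := by field_simp
  linarith

lemma medial_numerator_pos {u v x y : ℝ} (hu : 0 < u) (h1 : v / 2 - v / u * x < y) :
    0 < 2 * u * y + 2 * v * x - u * v := by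
  have h := mul_lt_mul_of_pos_left h1 hu
  have hux : u * (v / u * x) = v * x := by field_simp
  rw [mul_sub, hux] at h
  linarith

lemma div_add_one_sub_div_mul_div {u v x y : ℝ} (hu : u ≠ 0) (hv : v ≠ 0) (hx : x ≠ 0)
    (hy : y ≠ 0) (N : ℝ) (hN : N = 2 * u * y + 2 * v * x - u * v) :
    N / (2 * v * x) + (1 - N / (2 * v * x)) * (N / (2 * u * y)) = N / (4 * x * y) := by
  subst hN
  field_simp
  ring

theorem stmt_2 (u v x y : ℝ) (hu : 0 < u) (hv : 0 < v)
    (h1 : v / 2 - (v / u) * x < y) (h2 : y < v / 2) (h3 : 0 < x) (h4 : x < u / 2)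
    (w t : ℝ) (hw : w = (2 * u * y + 2 * v * x - u * v) / (2 * v * x))
    (ht : t = (2 * u * y + 2 * v * x - u * v) / (2 * u * y)) :
    0 < w ∧ w < 1 ∧ 0 < t ∧ t < 1 ∧
    x = (1/2) * (t * u) / (w + (1 - w) * t) ∧
    y = (1/2) * (w * v) / (w + (1 - w) * t) := by
  have hy : 0 < y := pos_of_sub_div_mul_lt hu hv h1 h4
  set N := 2 * u * y + 2 * v * x - u * v with hN
  have hN0 : 0 < N := medial_numerator_pos hu h1
  have hvx : 0 < 2 * v * x := by positivity
  have huy : 0 < 2 * u * y := by positivity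
  have hden : w + (1 - w) * t = N / (4 * x * y) := by
    rw [hw, ht]
    exact div_add_one_sub_div_mul_div hu.ne' hv.ne' h3.ne' hy.ne' N hN
  refine ⟨hw ▸ div_pos hN0 hvx, ?_, ht ▸ div_pos hN0 huy, ?_, ?_, ?_⟩
  · rw [hw, div_lt_one hvx]; nlinarith
  · rw [ht, div_lt_one huy]; nlinarith
  · rw [hden, ht]; field_simp; ring
  · rw [hden, hw]; field_simp; ring
end

section
/- The map (w,t) ↦ ( (1/2)·tu/(w+(1-w)t), (1/2)·wv/(w+(1-w)t) ) is a bijection from (0,1)×(0,1) onto the interior of the medial triangle of T, i.e., onto {(x,y) : v/2 - (v/u)x < y < v/2, 0 < x < u/2}. -/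
theorem stmt_3 (u v : ℝ) (hu : 0 < u) (hv : 0 < v) :
    Set.BijOn
      (fun p : ℝ × ℝ => ((1/2) * (p.2 * u) / (p.1 + (1 - p.1) * p.2),
                         (1/2) * (p.1 * v) / (p.1 + (1 - p.1) * p.2)))
      (Set.Ioo (0:ℝ) 1 ×ˢ Set.Ioo (0:ℝ) 1)
      {q : ℝ × ℝ | v / 2 - (v / u) * q.1 < q.2 ∧ q.2 < v / 2 ∧ 0 < q.1 ∧ q.1 < u / 2} := by
  have hu' := hu.ne'
  have hv' := hv.ne'
  set g : ℝ × ℝ → ℝ × ℝ := fun q =>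
    ((2*q.1/u + 2*q.2/v - 1)/(2*q.1/u), (2*q.1/u + 2*q.2/v - 1)/(2*q.2/v)) with hgdef
  apply Set.InvOn.bijOn (f' := g)
  · constructor
    · -- LeftInvOn g f
      rintro ⟨w, t⟩ ⟨⟨hw0, hw1⟩, ht0, ht1⟩
      have hd : 0 < w + (1 - w) * t := by nlinarith
      have hd' := hd.ne'
      simp only [hgdef]
      have ha : 2 * ((1/2) * (t * u) / (w + (1 - w) * t)) / u = t / (w + (1 - w) * t) := by
        field_simp
      have hb : 2 * ((1/2) * (w * v) / (w + (1 - w) * t)) / v = w / (w + (1 - w) * t) := by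
        field_simp
      simp only [ha, hb]
      have ht0' := ht0.ne'
      have hw0' := hw0.ne'
      ext <;> simp <;> field_simp <;> ring
    · -- RightInvOn : f (g q) = q on target
      rintro ⟨x, y⟩ ⟨hxy, hy, hx0, hx1⟩
      dsimp only [Set.mem_setOf_eq] at hxy hy hx0 hx1
      have hy0 : 0 < y := by
        have h3 : (v/u)*x < (v/u)*(u/2) := by
          apply mul_lt_mul_of_pos_left hx1; positivity
        have h4 : (v/u)*(u/2) = v/2 := by field_simp
        linarith
      have ha0 : 0 < 2*x/u := by positivity
      have hb0 : 0 < 2*y/v := by positivity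
      have hab : 0 < 2*x/u + 2*y/v - 1 := by
        have h1 : 2*x/u + 2*y/v - 1 = 2*(y - (v/2 - (v/u)*x))/v := by field_simp; ring
        rw [h1]
        have h2 : 0 < 2*(y - (v/2 - (v/u)*x)) := by linarith
        exact div_pos h2 hv
      simp only [hgdef]
      set a := 2*x/u with hadef
      set b := 2*y/v with hbdef
      have hden : (a+b-1)/a + (1 - (a+b-1)/a) * ((a+b-1)/b) = (a+b-1)/(a*b) := by
        field_simp
        ring
      have hxa : x = a * u / 2 := by rw [hadef]; field_simp
      have hyb : y = b * v / 2 := by rw [hbdef]; field_simp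
      show ((1/2) * ((a+b-1)/b * u) / ((a+b-1)/a + (1 - (a+b-1)/a) * ((a+b-1)/b)),
            (1/2) * ((a+b-1)/a * v) / ((a+b-1)/a + (1 - (a+b-1)/a) * ((a+b-1)/b))) = (x, y)
      rw [hden]
      have hab' := hab.ne'
      have ha' := ha0.ne'
      have hb' := hb0.ne'
      ext
      · show (1:ℝ)/2 * ((a+b-1)/b * u) / ((a+b-1)/(a*b)) = x
        rw [hxa]; field_simp
      · show (1:ℝ)/2 * ((a+b-1)/a * v) / ((a+b-1)/(a*b)) = y
        rw [hyb]; field_simp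
  · -- MapsTo f
    rintro ⟨w, t⟩ ⟨⟨hw0, hw1⟩, ht0, ht1⟩
    have hd : 0 < w + (1 - w) * t := by nlinarith
    refine ⟨?_, ?_, ?_, ?_⟩
    · -- v/2 - (v/u)*x < y
      have he : v/2 - (v/u) * ((1/2) * (t * u) / (w + (1 - w) * t))
          - (1/2) * (w * v) / (w + (1 - w) * t) = -(v*w*t/(2*(w + (1-w)*t))) := by
        field_simp
        ring
      have hpos : 0 < v*w*t/(2*(w + (1-w)*t)) := by positivity
      simp only
      linarith [he, hpos]
    · have he : (1/2) * (w * v) / (w + (1 - w) * t) - v/2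
          = -(v*(1-w)*t/(2*(w + (1-w)*t))) := by field_simp; ring
      have hpos : 0 < v*(1-w)*t/(2*(w + (1-w)*t)) := by
        have : 0 < 1 - w := by linarith
        positivity
      simp only
      linarith [he, hpos]
    · show 0 < (1/2) * (t * u) / (w + (1 - w) * t)
      positivity
    · have he : (1/2) * (t * u) / (w + (1 - w) * t) - u/2
          = -(u*w*(1-t)/(2*(w + (1-w)*t))) := by field_simp; ring
      have hpos : 0 < u*w*(1-t)/(2*(w + (1-w)*t)) := by
        have : 0 < 1 - t := by linarith
        positivity
      simp only
      linarith [he, hpos]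
  · -- MapsTo g
    rintro ⟨x, y⟩ ⟨hxy, hy, hx0, hx1⟩
    dsimp only [Set.mem_setOf_eq] at hxy hy hx0 hx1
    have hy0 : 0 < y := by
      have h3 : (v/u)*x < (v/u)*(u/2) := by
        apply mul_lt_mul_of_pos_left hx1; positivity
      have h4 : (v/u)*(u/2) = v/2 := by field_simp
      linarith
    have ha0 : 0 < 2*x/u := by positivity
    have hb0 : 0 < 2*y/v := by positivity
    have ha1 : 2*x/u < 1 := by rw [div_lt_one hu]; linarith
    have hb1 : 2*y/v < 1 := by rw [div_lt_one hv]; linarith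
    have hab : 0 < 2*x/u + 2*y/v - 1 := by
      have h1 : 2*x/u + 2*y/v - 1 = 2*(y - (v/2 - (v/u)*x))/v := by field_simp; ring
      rw [h1]
      have : 0 < y - (v/2 - (v/u)*x) := by linarith
      positivity
    constructor
    · constructor
      · exact div_pos hab ha0
      · rw [div_lt_one ha0]; linarith
    · constructor
      · exact div_pos hab hb0
      · rw [div_lt_one hb0]; linarith
end

section
/- For the conic with equation A x² + B y² + 2C xy + D x + E y + F = 0 where A = (vw)², B = (ut)², C = wt(2w+2t-2wt-1)uv, the discriminant quantity AB - C² equals 4(uvwt)²(1-w)(1-t)((1-t)w + t), which is strictly positive. -/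
theorem stmt_4 (u v w t : ℝ) (hu : 0 < u) (hv : 0 < v)
    (hw : 0 < w) (hw1 : w < 1) (ht : 0 < t) (ht1 : t < 1)
    (A B C : ℝ) (hA : A = (v * w)^2) (hB : B = (u * t)^2)
    (hC : C = w * t * (2*w + 2*t - 2*w*t - 1) * u * v) :
    A * B - C^2 = 4 * (u*v*w*t)^2 * (1 - w) * (1 - t) * ((1 - t) * w + t) ∧
    0 < A * B - C^2 := by
  subst hA hB hC
  constructor
  · ring
  · have h : (0:ℝ) < 4 * (u*v*w*t)^2 * (1 - w) * (1 - t) * ((1 - t) * w + t) := by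
      have h1 : (0:ℝ) < 1 - w := by linarith
      have h2 : (0:ℝ) < 1 - t := by linarith
      have h3 : (0:ℝ) < (1 - t) * w + t := by nlinarith
      have h4 : (0:ℝ) < (u*v*w*t)^2 := by positivity
      nlinarith [mul_pos (mul_pos (mul_pos h4 h1) h2) h3]
    nlinarith [h]
end

section
/- The quantity A E² + B D² + 4 F C² - 2 C D E - 4 A B F equals 16 (uvwt)⁴ (1-w)² (1-t)², which is strictly positive (so the conic is a nondegenerate ellipse). -/
theorem stmt_5 (u v w t : ℝ) (hu : 0 < u) (hv : 0 < v)
    (hw : 0 < w) (hw1 : w < 1) (ht : 0 < t) (ht1 : t < 1)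
    (A B C D E F : ℝ) (hA : A = (v * w)^2) (hB : B = (u * t)^2)
    (hC : C = w * t * (2*w + 2*t - 2*w*t - 1) * u * v)
    (hD : D = -2 * u * t * (v * w)^2) (hE : E = -2 * w * v * (u * t)^2)
    (hF : F = (u*v*w*t)^2) :
    A * E^2 + B * D^2 + 4 * F * C^2 - 2 * C * D * E - 4 * A * B * F
      = 16 * (u*v*w*t)^4 * (1 - w)^2 * (1 - t)^2 ∧
    0 < A * E^2 + B * D^2 + 4 * F * C^2 - 2 * C * D * E - 4 * A * B * F := by
  have h : A * E^2 + B * D^2 + 4 * F * C^2 - 2 * C * D * E - 4 * A * B * F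
      = 16 * (u*v*w*t)^4 * (1 - w)^2 * (1 - t)^2 := by
    subst hA hB hC hD hE hF; ring
  refine ⟨h, h ▸ ?_⟩
  have h1 : (0:ℝ) < 1 - w := by linarith
  have h2 : (0:ℝ) < 1 - t := by linarith
  positivity
end

section
/- The three points T₁ = (ut, 0), T₂ = (0, vw), and T₃ = ( ut(1-w)/(w+t-2wt), vw(1-t)/(w+t-2wt) ) all satisfy the equation (vw)²x² + (ut)²y² + 2wt(2w+2t-2wt-1)uv·xy - 2ut(vw)²x - 2wv(ut)²y + (uvwt)² = 0. -/
theorem add_sub_two_mul_mul_pos {w t : ℝ} (hw : 0 < w) (hw1 : w < 1) (ht : 0 < t)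
    (ht1 : t < 1) : 0 < w + t - 2 * w * t := by
  have hsplit : w + t - 2 * w * t = w * (1 - t) + t * (1 - w) := by ring
  rw [hsplit]
  exact add_pos (mul_pos hw (sub_pos.2 ht1)) (mul_pos ht (sub_pos.2 hw1))

theorem stmt_6_general (u v w t : ℝ)
    (hw : 0 < w) (hw1 : w < 1) (ht : 0 < t) (ht1 : t < 1)
    (H : ℝ → ℝ → ℝ)
    (hH : ∀ x y, H x y = (v*w)^2 * x^2 + (u*t)^2 * y^2
        + 2 * w * t * (2*w + 2*t - 2*w*t - 1) * u * v * x * y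
        - 2 * u * t * (v*w)^2 * x - 2 * w * v * (u*t)^2 * y + (u*v*w*t)^2) :
    H (u*t) 0 = 0 ∧ H 0 (v*w) = 0 ∧
    H (u*t*(1-w) / (w + t - 2*w*t)) (v*w*(1-t) / (w + t - 2*w*t)) = 0 := by
  refine ⟨by rw [hH]; ring, by rw [hH]; ring, ?_⟩
  -- An opaque denominator keeps `field_simp` from expanding `(w + t - 2 * w * t) ^ 2`.
  obtain ⟨d, hd_def, hd⟩ : ∃ d, d = w + t - 2 * w * t ∧ d ≠ 0 :=
    ⟨_, rfl, (add_sub_two_mul_mul_pos hw hw1 ht ht1).ne'⟩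
  rw [hH, ← hd_def]
  field_simp
  rw [hd_def]
  ring

theorem stmt_6 (u v w t : ℝ) (hu : 0 < u) (hv : 0 < v)
    (hw : 0 < w) (hw1 : w < 1) (ht : 0 < t) (ht1 : t < 1)
    (H : ℝ → ℝ → ℝ)
    (hH : ∀ x y, H x y = (v*w)^2 * x^2 + (u*t)^2 * y^2
        + 2 * w * t * (2*w + 2*t - 2*w*t - 1) * u * v * x * y
        - 2 * u * t * (v*w)^2 * x - 2 * w * v * (u*t)^2 * y + (u*v*w*t)^2) :
    H (u*t) 0 = 0 ∧ H 0 (v*w) = 0 ∧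
    H (u*t*(1-w) / (w + t - 2*w*t)) (v*w*(1-t) / (w + t - 2*w*t)) = 0 :=
  stmt_6_general u v w t hw hw1 ht ht1 H hH
end

section
/- Let H(x,y) be as in (3). The gradient of H at T₃ = ( ut(1-w)/(w+t-2wt), vw(1-t)/(w+t-2wt) ) is parallel to (v, u); that is, the tangent line to H = 0 at T₃ has slope -v/u, coinciding with the hypotenuse of T. -/
lemma deriv_quad (a b c x : ℝ) :
    deriv (fun x : ℝ => a * x ^ 2 + b * x + c) x = 2 * a * x + b := by
  have h : HasDerivAt (fun x : ℝ => a * x ^ 2 + b * x + c)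
      (a * (2 * x ^ 1) + b * 1) x := by
    exact (((hasDerivAt_pow 2 x).const_mul a).add ((hasDerivAt_id x).const_mul b)).add_const c
  rw [h.deriv]; ring

theorem stmt_9 (u v w t : ℝ) (hu : 0 < u) (hv : 0 < v)
    (hw : 0 < w) (hw1 : w < 1) (ht : 0 < t) (ht1 : t < 1)
    (H : ℝ → ℝ → ℝ)
    (hH : ∀ x y, H x y = (v*w)^2 * x^2 + (u*t)^2 * y^2
        + 2 * w * t * (2*w + 2*t - 2*w*t - 1) * u * v * x * y
        - 2 * u * t * (v*w)^2 * x - 2 * w * v * (u*t)^2 * y + (u*v*w*t)^2)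
    (x₃ y₃ : ℝ) (hx₃ : x₃ = u*t*(1-w) / (w + t - 2*w*t))
    (hy₃ : y₃ = v*w*(1-t) / (w + t - 2*w*t)) :
    u * deriv (fun x => H x y₃) x₃ = v * deriv (fun y => H x₃ y) y₃ ∧
    (deriv (fun x => H x y₃) x₃, deriv (fun y => H x₃ y) y₃) ≠ (0, 0) := by
  have hd : 0 < w + t - 2*w*t := by nlinarith
  have hd' : w + t - 2*w*t ≠ 0 := ne_of_gt hd
  have e1 : (fun x => H x y₃)
      = fun x : ℝ => (v*w)^2 * x ^ 2
        + (2 * w * t * (2*w + 2*t - 2*w*t - 1) * u * v * y₃ - 2 * u * t * (v*w)^2) * x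
        + ((u*t)^2 * y₃^2 - 2 * w * v * (u*t)^2 * y₃ + (u*v*w*t)^2) := by
    funext x; rw [hH]; ring
  have e2 : (fun y => H x₃ y)
      = fun y : ℝ => (u*t)^2 * y ^ 2
        + (2 * w * t * (2*w + 2*t - 2*w*t - 1) * u * v * x₃ - 2 * w * v * (u*t)^2) * y
        + ((v*w)^2 * x₃^2 - 2 * u * t * (v*w)^2 * x₃ + (u*v*w*t)^2) := by
    funext y; rw [hH]; ring
  rw [e1, e2, deriv_quad, deriv_quad]
  have hpos : 0 < 2 * (v*w)^2 * x₃
      + (2 * w * t * (2*w + 2*t - 2*w*t - 1) * u * v * y₃ - 2 * u * t * (v*w)^2) := by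
    have key : (2 * (v*w)^2 * x₃
        + (2 * w * t * (2*w + 2*t - 2*w*t - 1) * u * v * y₃ - 2 * u * t * (v*w)^2))
        * (w + t - 2*w*t) = 4 * u * v^2 * w^2 * t^2 * (1-w) * (1-t) := by
      rw [hx₃, hy₃]; field_simp; ring
    have h1w : (0:ℝ) < 1 - w := by linarith
    have h1t : (0:ℝ) < 1 - t := by linarith
    have h4 : 0 < 4 * u * v^2 * w^2 * t^2 * (1-w) * (1-t) := by positivity
    nlinarith
  constructor
  · rw [hx₃, hy₃]; field_simp; ring
  · intro h
    rw [Prod.mk.injEq] at h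
    linarith [h.1, hpos]
end
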